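/- Let n, D, T be positive integers, let Â^(1), …, Â^(T) be n×n real matrices (one per flow), and let g_1, …, g_T : (Fin D → ℝ) → (Fin D → ℝ) be everywhere differentiable maps. Given X : Matrix (Fin n) (Fin D) ℝ, define recursively X^(0) = X and, for j = 1,…,T, X̃^(j) = Â^(j) * X^(j−1) and X^(j) i = g_j (X̃^(j) i). Let F_j be the map X' ↦ (i ↦ g_j ((Â^(j) * X') i)) and let F = F_T ∘ ⋯ ∘ F_1. Then F is differentiable at X and |det (fderiv ℝ F X)| = ∏_{j=1}^{T} ( |det Â^(j)|^D · ∏_{i : Fin n} |det (fderiv ℝ g_j (X̃^(j) i))| ). -/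

import Mathlib

/-!
Each layer `X ↦ (i ↦ g ((A * X) i))` is a row-wise map composed with left multiplication by `A`,
so by the chain rule its derivative is the block-diagonal map of the row Jacobians of `g` after
`X ↦ A * X`. Left multiplication by `A` acts on each of the `D` columns separately, hence has
determinant `(det A) ^ D`, while the block-diagonal part has determinant the product of the row
Jacobian determinants. The determinant of the composite flow is then the product over the layers,
already before taking absolute values.
-/

attribute [local instance] Matrix.normedAddCommGroup Matrix.normedSpace

/-- `iterFlowParam Ahat g j h X` is `(F_j ∘ F_{j-1} ∘ ⋯ ∘ F_1) X`, where the `k`-th constituent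
flow `F_k` maps `X'` to the matrix whose `i`-th row is `g_k ((Ahat_k * X') i)`, each flow having
its own convolution matrix `Ahat_k`.  In particular `iterFlowParam Ahat g 0 _ X = X` (so
`X^(0) = X`) and `X^(j+1) i = g_{j+1} (X̃^(j+1) i)` with `X̃^(j+1) = Ahat_{j+1} * X^(j)`. -/
def iterFlowParam {n D T : ℕ} (Ahat : Fin T → Matrix (Fin n) (Fin n) ℝ)
    (g : Fin T → (Fin D → ℝ) → (Fin D → ℝ)) :
    (j : ℕ) → j ≤ T → Matrix (Fin n) (Fin D) ℝ → Matrix (Fin n) (Fin D) ℝ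
  | 0, _, X => X
  | j + 1, h, X =>
    Matrix.of fun i =>
      g ⟨j, h⟩ ((Ahat ⟨j, h⟩ * iterFlowParam Ahat g j (Nat.le_of_succ_le h) X) i)

open Matrix

theorem Matrix.det_mulLeftLinearMap {R m κ : Type*} [CommRing R] [Fintype m] [DecidableEq m]
    [Fintype κ] (A : Matrix m m R) :
    LinearMap.det (mulLeftLinearMap κ R A) = A.det ^ Fintype.card κ := by
  let e : (κ → m → R) ≃ₗ[R] Matrix m κ R := transposeLinearEquiv κ m R R
  have hconj : mulLeftLinearMap κ R A =
      e.toLinearMap ∘ₗ (LinearMap.pi fun k => (toLin' A).comp (LinearMap.proj k)) ∘ₗ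
        e.symm.toLinearMap := by
    ext X i k
    rfl
  rw [hconj, LinearMap.det_conj, LinearMap.det_pi, LinearMap.det_toLin', Finset.prod_const,
    Finset.card_univ]

section FlowLayer

variable {𝕜 m κ : Type*} [NontriviallyNormedField 𝕜] [CompleteSpace 𝕜] [Fintype m] [Fintype κ]

def flowLayer (A : Matrix m m 𝕜) (g : (κ → 𝕜) → κ → 𝕜) (X : Matrix m κ 𝕜) : Matrix m κ 𝕜 :=
  of fun i => g ((A * X) i)

-- The declared codomain `Matrix m κ 𝕜` (rather than the Pi type produced by
-- `ContinuousLinearMap.pi`) makes `HasFDerivAt.fderiv` see the matrix norm topology.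
noncomputable def flowLayerDeriv (A : Matrix m m 𝕜) (g : (κ → 𝕜) → κ → 𝕜) (Y : Matrix m κ 𝕜) :
    Matrix m κ 𝕜 →L[𝕜] Matrix m κ 𝕜 :=
  (ContinuousLinearMap.pi fun i => (fderiv 𝕜 g ((A * Y) i)).comp (ContinuousLinearMap.proj i)).comp
    (mulLeftLinearMap κ 𝕜 A).toContinuousLinearMap

theorem hasFDerivAt_flowLayer {A : Matrix m m 𝕜} {g : (κ → 𝕜) → κ → 𝕜} {Y : Matrix m κ 𝕜}
    (hg : ∀ i, DifferentiableAt 𝕜 g ((A * Y) i)) :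
    HasFDerivAt (flowLayer A g) (flowLayerDeriv A g Y) Y := by
  have hrows : HasFDerivAt (fun (Z : Matrix m κ 𝕜) i => g (Z i))
      (ContinuousLinearMap.pi fun i => (fderiv 𝕜 g ((A * Y) i)).comp (ContinuousLinearMap.proj i))
      (A * Y) :=
    hasFDerivAt_pi'.2 fun i => (hg i).hasFDerivAt.comp (A * Y) (hasFDerivAt_apply i (A * Y))
  exact hrows.comp Y (mulLeftLinearMap κ 𝕜 A).toContinuousLinearMap.hasFDerivAt

theorem det_flowLayerDeriv [DecidableEq m] (A : Matrix m m 𝕜) (g : (κ → 𝕜) → κ → 𝕜)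
    (Y : Matrix m κ 𝕜) :
    LinearMap.det (flowLayerDeriv A g Y).toLinearMap =
      A.det ^ Fintype.card κ * ∏ i, LinearMap.det (fderiv 𝕜 g ((A * Y) i)).toLinearMap := by
  erw [flowLayerDeriv, ContinuousLinearMap.toLinearMap_comp, LinearMap.det_comp, LinearMap.det_pi,
    LinearMap.coe_toContinuousLinearMap, det_mulLeftLinearMap, mul_comm]

end FlowLayer

section Iteration

variable {n D T : ℕ} {Ahat : Fin T → Matrix (Fin n) (Fin n) ℝ}
  {g : Fin T → (Fin D → ℝ) → (Fin D → ℝ)}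

theorem iterFlowParam_zero (h : 0 ≤ T) : iterFlowParam Ahat g 0 h = id :=
  rfl

theorem iterFlowParam_succ (j : ℕ) (h : j + 1 ≤ T) :
    iterFlowParam Ahat g (j + 1) h =
      flowLayer (Ahat ⟨j, h⟩) (g ⟨j, h⟩) ∘ iterFlowParam Ahat g j (Nat.le_of_succ_le h) :=
  rfl

theorem differentiableAt_iterFlowParam (hg : ∀ j, Differentiable ℝ (g j))
    (X : Matrix (Fin n) (Fin D) ℝ) :
    ∀ j (h : j ≤ T), DifferentiableAt ℝ (iterFlowParam Ahat g j h) X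
  | 0, _ => differentiableAt_id
  | j + 1, h => by
    rw [iterFlowParam_succ]
    exact (hasFDerivAt_flowLayer fun i => hg _ _).differentiableAt.comp X
      (differentiableAt_iterFlowParam hg X j _)

theorem det_fderiv_iterFlowParam (hg : ∀ j, Differentiable ℝ (g j))
    (X : Matrix (Fin n) (Fin D) ℝ) : ∀ j (h : j ≤ T),
    LinearMap.det (fderiv ℝ (iterFlowParam Ahat g j h) X).toLinearMap =
      ∏ k : Fin j, ((Ahat (k.castLE h)).det ^ D *
        ∏ i, LinearMap.det (fderiv ℝ (g (k.castLE h))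
          ((Ahat (k.castLE h) * iterFlowParam Ahat g k (k.isLt.le.trans h) X) i)).toLinearMap)
  | 0, _ => by simp [iterFlowParam_zero]
  | j + 1, h => by
    have hlayer : HasFDerivAt (flowLayer (Ahat ⟨j, h⟩) (g ⟨j, h⟩))
        (flowLayerDeriv (Ahat ⟨j, h⟩) (g ⟨j, h⟩) (iterFlowParam Ahat g j (by omega) X))
        (iterFlowParam Ahat g j (by omega) X) :=
      hasFDerivAt_flowLayer fun i => hg _ _
    erw [iterFlowParam_succ,
      fderiv_comp X hlayer.differentiableAt (differentiableAt_iterFlowParam hg X j _),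
      ContinuousLinearMap.toLinearMap_comp, LinearMap.det_comp, hlayer.fderiv, det_flowLayerDeriv,
      det_fderiv_iterFlowParam hg X j, Fin.prod_univ_castSucc, mul_comm, Fintype.card_fin]
    rfl

end Iteration

theorem gcflow_full_det_param_general (n D T : ℕ)
    (Ahat : Fin T → Matrix (Fin n) (Fin n) ℝ)
    (g : Fin T → (Fin D → ℝ) → (Fin D → ℝ))
    (hg : ∀ j : Fin T, Differentiable ℝ (g j))
    (X : Matrix (Fin n) (Fin D) ℝ) :
    DifferentiableAt ℝ (iterFlowParam Ahat g T le_rfl) X ∧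
      |LinearMap.det (fderiv ℝ (iterFlowParam Ahat g T le_rfl) X).toLinearMap| =
        ∏ j : Fin T,
          (|(Ahat j).det| ^ D *
            ∏ i : Fin n,
              |LinearMap.det
                (fderiv ℝ (g j)
                  ((Ahat j * iterFlowParam Ahat g j.val (Nat.le_of_lt j.isLt) X) i)).toLinearMap|) := by
  refine ⟨differentiableAt_iterFlowParam hg X T le_rfl, ?_⟩
  rw [det_fderiv_iterFlowParam hg X T le_rfl]
  simp only [Fin.castLE_refl, Finset.abs_prod, abs_mul, abs_pow]

/-- For the composite flow `F = F_T ∘ ⋯ ∘ F_1` with everywhere differentiable row maps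
`g_1, …, g_T` and per-flow convolution matrices `Ahat^(1), …, Ahat^(T)`, `F` is
differentiable at `X` and
`|det (fderiv ℝ F X)| = ∏_{j=1}^T (|det Ahat^(j)|^D * ∏_i |det (fderiv ℝ g_j (X̃^(j) i))|)`,
where `X̃^(j) = Ahat^(j) * X^(j-1)`. -/
theorem gcflow_full_det_param (n D T : ℕ) (hn : 0 < n) (hD : 0 < D) (hT : 0 < T)
    (Ahat : Fin T → Matrix (Fin n) (Fin n) ℝ)
    (g : Fin T → (Fin D → ℝ) → (Fin D → ℝ))
    (hg : ∀ j : Fin T, Differentiable ℝ (g j))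
    (X : Matrix (Fin n) (Fin D) ℝ) :
    DifferentiableAt ℝ (iterFlowParam Ahat g T le_rfl) X ∧
      |LinearMap.det (fderiv ℝ (iterFlowParam Ahat g T le_rfl) X).toLinearMap| =
        ∏ j : Fin T,
          (|(Ahat j).det| ^ D *
            ∏ i : Fin n,
              |LinearMap.det
                (fderiv ℝ (g j)
                  ((Ahat j * iterFlowParam Ahat g j.val (Nat.le_of_lt j.isLt) X) i)).toLinearMap|) :=
  gcflow_full_det_param_general n D T Ahat g hg X
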